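/- arXiv:2512.00385 — 2 statements merged into one kernel-verified Lean document; each statement's English description precedes it below -/
import Mathlib

section
/- Let 𝒫 be a partition of C into nonempty blocks, let P, Q be two distinct blocks of 𝒫, and let 𝒫' be obtained from 𝒫 by replacing P and Q with P ∪ Q. Then Ω(𝒫') < Ω(𝒫) if and only if ‖F_P − F_Q‖² < λ · (Σ_{{p,q}∈ℰ, p∈P, q∈Q} w_{p,q}) · (|P|+|Q|)/(|P|·|Q|). -/
open Finset

variable {C E : Type*}

noncomputable def mean [NormedAddCommGroup E] [InnerProductSpace ℝ E]
    (f : C → E) (U : Finset C) : E :=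
  (U.card : ℝ)⁻¹ • ∑ p ∈ U, f p

noncomputable def cost [NormedAddCommGroup E] [InnerProductSpace ℝ E]
    (f : C → E) (U : Finset C) : ℝ :=
  ∑ p ∈ U, ‖f p - mean f U‖ ^ 2

def IsPartition [Fintype C] (Prt : Finset (Finset C)) : Prop :=
  (∀ U ∈ Prt, U.Nonempty) ∧ (∀ U ∈ Prt, ∀ V ∈ Prt, U ≠ V → Disjoint U V) ∧
    ∀ p : C, ∃ U ∈ Prt, p ∈ U

open scoped Classical in
/-- Sum of the weights of the edges of `ℰ` whose endpoints lie in different blocks of `Prt`. -/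
noncomputable def crossSum (ℰ : Finset (Sym2 C)) (w : Sym2 C → ℝ)
    (Prt : Finset (Finset C)) : ℝ :=
  ∑ e ∈ ℰ.filter (fun e => ¬ ∃ U ∈ Prt, ∀ p ∈ e, p ∈ U), w e

noncomputable def energy [Fintype C] [NormedAddCommGroup E] [InnerProductSpace ℝ E]
    (f : C → E) (ℰ : Finset (Sym2 C)) (w : Sym2 C → ℝ) (lam : ℝ)
    (Prt : Finset (Finset C)) : ℝ :=
  ∑ U ∈ Prt, cost f U + lam * crossSum ℰ w Prt

open scoped Classical in
/-- Sum of the weights of the edges of `ℰ` joining `P` and `Q`. -/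
noncomputable def joinSum (ℰ : Finset (Sym2 C)) (w : Sym2 C → ℝ) (P Q : Finset C) : ℝ :=
  ∑ e ∈ ℰ.filter (fun e => ∃ p ∈ P, ∃ q ∈ Q, e = Sym2.mk p q), w e

noncomputable def mergeGain [NormedAddCommGroup E] [InnerProductSpace ℝ E]
    (f : C → E) (ℰ : Finset (Sym2 C)) (w : Sym2 C → ℝ) (lam : ℝ)
    (P Q : Finset C) : ℝ :=
  -(((P.card : ℝ) * (Q.card : ℝ)) / ((P.card : ℝ) + (Q.card : ℝ))) *
      ‖mean f P - mean f Q‖ ^ 2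
    + lam * joinSum ℰ w P Q

/-!
Expanding squares gives `W(U) = Σ_{p∈U} ‖f p‖² - |U| ‖F_U‖²`, and the weighted parallelogram
law turns this into the Ward identity
`W(P ∪ Q) = W(P) + W(Q) + |P||Q|/(|P|+|Q|) ‖F_P - F_Q‖²`. Merging `P` and `Q` removes from
the cut exactly the edges joining `P` and `Q`, so `Ω(𝒫') = Ω(𝒫) - mergeGain`, and the sign of
`mergeGain` is the stated inequality after dividing by `|P||Q|/(|P|+|Q|) > 0`.
-/

section Cost

variable [NormedAddCommGroup E] [InnerProductSpace ℝ E]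

theorem norm_smul_add_smul_sq (a b : E) (s t : ℝ) :
    ‖s • a + t • b‖ ^ 2 = (s + t) * (s * ‖a‖ ^ 2 + t * ‖b‖ ^ 2) - s * t * ‖a - b‖ ^ 2 := by
  rw [norm_add_sq_real, norm_sub_sq_real, norm_smul, norm_smul, real_inner_smul_left,
    real_inner_smul_right, mul_pow, mul_pow, Real.norm_eq_abs, Real.norm_eq_abs, sq_abs, sq_abs]
  ring

theorem card_smul_mean (f : C → E) (U : Finset C) : (#U : ℝ) • mean f U = ∑ p ∈ U, f p := by
  rcases U.eq_empty_or_nonempty with rfl | hU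
  · simp
  · rw [mean, smul_inv_smul₀ (by exact_mod_cast hU.card_ne_zero)]

theorem cost_eq_sum_norm_sq_sub (f : C → E) (U : Finset C) :
    cost f U = ∑ p ∈ U, ‖f p‖ ^ 2 - #U * ‖mean f U‖ ^ 2 := by
  have hinner : ∑ p ∈ U, inner ℝ (f p) (mean f U) = #U * ‖mean f U‖ ^ 2 := by
    rw [← sum_inner, ← card_smul_mean, real_inner_smul_left, real_inner_self_eq_norm_sq]
  simp only [cost, norm_sub_sq_real, sum_add_distrib, sum_sub_distrib, ← mul_sum, hinner,
    sum_const, nsmul_eq_mul]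
  ring

theorem card_union_smul_mean_union [DecidableEq C] (f : C → E) {P Q : Finset C}
    (hd : Disjoint P Q) :
    ((#P : ℝ) + #Q) • mean f (P ∪ Q) = (#P : ℝ) • mean f P + (#Q : ℝ) • mean f Q := by
  rw [card_smul_mean, card_smul_mean, ← sum_union hd, ← card_smul_mean, card_union_of_disjoint hd,
    Nat.cast_add]

theorem cost_union [DecidableEq C] (f : C → E) {P Q : Finset C} (hd : Disjoint P Q) :
    cost f (P ∪ Q) = cost f P + cost f Q
      + (#P : ℝ) * #Q / (#P + #Q) * ‖mean f P - mean f Q‖ ^ 2 := by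
  set p : ℝ := (#P : ℝ)
  set q : ℝ := (#Q : ℝ)
  have hp : 0 ≤ p := Nat.cast_nonneg _
  have hq : 0 ≤ q := Nat.cast_nonneg _
  have hmean : (p + q) * ‖mean f (P ∪ Q)‖ ^ 2
      = p * ‖mean f P‖ ^ 2 + q * ‖mean f Q‖ ^ 2 - p * q / (p + q) * ‖mean f P - mean f Q‖ ^ 2 := by
    rcases (add_nonneg hp hq).eq_or_lt with hpq | hpq
    -- two empty blocks: both sides vanish, the coefficient being `0 / 0 = 0`
    · obtain ⟨hp0, hq0⟩ : p = 0 ∧ q = 0 := by constructor <;> linarith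
      simp [hp0, hq0]
    · have hsq := congrArg (‖·‖ ^ 2) (card_union_smul_mean_union f hd)
      simp only [norm_smul_add_smul_sq, norm_smul, mul_pow, Real.norm_eq_abs, sq_abs] at hsq
      field_simp
      linear_combination hsq
  rw [cost_eq_sum_norm_sq_sub, cost_eq_sum_norm_sq_sub, cost_eq_sum_norm_sq_sub, sum_union hd,
    card_union_of_disjoint hd, Nat.cast_add, hmean]
  ring

end Cost

section Merge

variable {Prt : Finset (Finset C)} {P Q : Finset C}

theorem not_exists_mem_of_mem_of_mem (hdisj : (Prt : Set (Finset C)).PairwiseDisjoint id)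
    (hP : P ∈ Prt) (hQ : Q ∈ Prt) (hPQ : P ≠ Q) {a b : C} (ha : a ∈ P) (hb : b ∈ Q) :
    ¬ ∃ U ∈ Prt, a ∈ U ∧ b ∈ U := by
  rintro ⟨U, hU, haU, hbU⟩
  exact hPQ ((hdisj.elim_finset hU hP a haU ha).symm.trans (hdisj.elim_finset hU hQ b hbU hb))

variable [DecidableEq C]

def mergeBlocks (Prt : Finset (Finset C)) (P Q : Finset C) : Finset (Finset C) :=
  insert (P ∪ Q) ((Prt.erase P).erase Q)

theorem exists_mem_mergeBlocks_iff (hP : P ∈ Prt) (hQ : Q ∈ Prt) (a b : C) :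
    (∃ U ∈ mergeBlocks Prt P Q, a ∈ U ∧ b ∈ U) ↔
      (∃ U ∈ Prt, a ∈ U ∧ b ∈ U) ∨ (a ∈ P ∧ b ∈ Q ∨ a ∈ Q ∧ b ∈ P) := by
  constructor
  · rintro ⟨U, hU, ha, hb⟩
    rcases mem_insert.mp hU with rfl | hU
    · rw [mem_union] at ha hb
      rcases ha with ha | ha <;> rcases hb with hb | hb
      · exact .inl ⟨P, hP, ha, hb⟩
      · exact .inr (.inl ⟨ha, hb⟩)
      · exact .inr (.inr ⟨ha, hb⟩)
      · exact .inl ⟨Q, hQ, ha, hb⟩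
    · exact .inl ⟨U, mem_of_mem_erase (mem_of_mem_erase hU), ha, hb⟩
  · have hPQ : P ∪ Q ∈ mergeBlocks Prt P Q := mem_insert_self _ _
    rintro (⟨U, hU, ha, hb⟩ | ⟨ha, hb⟩ | ⟨ha, hb⟩)
    · obtain rfl | hUP := eq_or_ne U P
      · exact ⟨U ∪ Q, hPQ, mem_union_left _ ha, mem_union_left _ hb⟩
      obtain rfl | hUQ := eq_or_ne U Q
      · exact ⟨P ∪ U, hPQ, mem_union_right _ ha, mem_union_right _ hb⟩
      exact ⟨U, mem_insert_of_mem (mem_erase.mpr ⟨hUQ, mem_erase.mpr ⟨hUP, hU⟩⟩), ha, hb⟩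
    · exact ⟨P ∪ Q, hPQ, mem_union_left _ ha, mem_union_right _ hb⟩
    · exact ⟨P ∪ Q, hPQ, mem_union_right _ ha, mem_union_left _ hb⟩

theorem crossSum_eq_crossSum_mergeBlocks_add_joinSum (ℰ : Finset (Sym2 C)) (w : Sym2 C → ℝ)
    (hdisj : (Prt : Set (Finset C)).PairwiseDisjoint id) (hP : P ∈ Prt) (hQ : Q ∈ Prt)
    (hPQ : P ≠ Q) :
    crossSum ℰ w Prt = crossSum ℰ w (mergeBlocks Prt P Q) + joinSum ℰ w P Q := by
  classical
  rw [crossSum, crossSum, joinSum, sum_filter, sum_filter, sum_filter, ← sum_add_distrib]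
  refine sum_congr rfl fun e _ => ?_
  induction e using Sym2.ind with
  | h a b =>
    have hjoin : (∃ p ∈ P, ∃ q ∈ Q, s(a, b) = s(p, q)) ↔ a ∈ P ∧ b ∈ Q ∨ a ∈ Q ∧ b ∈ P := by
      constructor
      · rintro ⟨p, hp, q, hq, he⟩
        rcases Sym2.eq_iff.mp he with ⟨rfl, rfl⟩ | ⟨rfl, rfl⟩
        exacts [.inl ⟨hp, hq⟩, .inr ⟨hq, hp⟩]
      · rintro (⟨ha, hb⟩ | ⟨ha, hb⟩)
        exacts [⟨a, ha, b, hb, rfl⟩, ⟨b, hb, a, ha, Sym2.eq_swap⟩]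
    have hcut : a ∈ P ∧ b ∈ Q ∨ a ∈ Q ∧ b ∈ P → ¬ ∃ U ∈ Prt, a ∈ U ∧ b ∈ U := by
      rintro (⟨ha, hb⟩ | ⟨ha, hb⟩)
      · exact not_exists_mem_of_mem_of_mem hdisj hP hQ hPQ ha hb
      · exact not_exists_mem_of_mem_of_mem hdisj hQ hP hPQ.symm ha hb
    simp only [Sym2.forall_mem_pair, exists_mem_mergeBlocks_iff hP hQ, hjoin]
    by_cases hJ : a ∈ P ∧ b ∈ Q ∨ a ∈ Q ∧ b ∈ P
    · simp [hJ, hcut hJ]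
    · simp [hJ]

theorem union_notMem_erase_erase (hdisj : (Prt : Set (Finset C)).PairwiseDisjoint id)
    (hP : P ∈ Prt) (hPne : P.Nonempty) : P ∪ Q ∉ (Prt.erase P).erase Q := by
  intro hPQ
  obtain ⟨hne, hmem⟩ := mem_erase.mp (mem_of_mem_erase hPQ)
  obtain ⟨a, ha⟩ := hPne
  exact hne (hdisj.elim_finset hmem hP a (mem_union_left _ ha) ha)

theorem sum_mergeBlocks {M : Type*} [AddCommGroup M] (g : Finset C → M)
    (hdisj : (Prt : Set (Finset C)).PairwiseDisjoint id) (hP : P ∈ Prt) (hQ : Q ∈ Prt)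
    (hPQ : P ≠ Q) (hPne : P.Nonempty) :
    ∑ U ∈ mergeBlocks Prt P Q, g U = ∑ U ∈ Prt, g U - g P - g Q + g (P ∪ Q) := by
  rw [mergeBlocks, sum_insert (union_notMem_erase_erase hdisj hP hPne), ← add_sum_erase _ _ hP,
    ← add_sum_erase _ _ (mem_erase.mpr ⟨hPQ.symm, hQ⟩)]
  abel

theorem energy_mergeBlocks [Fintype C] [NormedAddCommGroup E] [InnerProductSpace ℝ E]
    (f : C → E) (ℰ : Finset (Sym2 C)) (w : Sym2 C → ℝ) (lam : ℝ)
    (hdisj : (Prt : Set (Finset C)).PairwiseDisjoint id) (hP : P ∈ Prt) (hQ : Q ∈ Prt)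
    (hPQ : P ≠ Q) (hPne : P.Nonempty) :
    energy f ℰ w lam (mergeBlocks Prt P Q) = energy f ℰ w lam Prt - mergeGain f ℰ w lam P Q := by
  rw [energy, energy, sum_mergeBlocks _ hdisj hP hQ hPQ hPne,
    cost_union f (P := P) (Q := Q) (hdisj hP hQ hPQ),
    crossSum_eq_crossSum_mergeBlocks_add_joinSum ℰ w hdisj hP hQ hPQ, mergeGain]
  ring

end Merge

theorem mergeGain_pos_iff [NormedAddCommGroup E] [InnerProductSpace ℝ E] (f : C → E)
    (ℰ : Finset (Sym2 C)) (w : Sym2 C → ℝ) (lam : ℝ) {P Q : Finset C} (hP : P.Nonempty)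
    (hQ : Q.Nonempty) :
    0 < mergeGain f ℰ w lam P Q ↔
      ‖mean f P - mean f Q‖ ^ 2 < lam * joinSum ℰ w P Q * ((#P + #Q) / (#P * #Q)) := by
  have hp : (0 : ℝ) < #P := by exact_mod_cast hP.card_pos
  have hq : (0 : ℝ) < #Q := by exact_mod_cast hQ.card_pos
  have hgain : mergeGain f ℰ w lam P Q = (#P * #Q / (#P + #Q)) *
      (lam * joinSum ℰ w P Q * ((#P + #Q) / (#P * #Q)) - ‖mean f P - mean f Q‖ ^ 2) := by
    rw [mergeGain]
    field_simp
    ring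
  rw [hgain, mul_pos_iff_of_pos_left (by positivity), sub_pos]

theorem merge_decreases_energy_iff_general [Fintype C] [DecidableEq C]
    [NormedAddCommGroup E] [InnerProductSpace ℝ E]
    (f : C → E) (ℰ : Finset (Sym2 C))
    (w : Sym2 C → ℝ) (lam : ℝ)
    (Prt : Finset (Finset C)) (hPrt : IsPartition Prt)
    (P Q : Finset C) (hP : P ∈ Prt) (hQ : Q ∈ Prt) (hPQ : P ≠ Q) :
    energy f ℰ w lam (insert (P ∪ Q) ((Prt.erase P).erase Q)) < energy f ℰ w lam Prt ↔
      ‖mean f P - mean f Q‖ ^ 2 <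
        lam * joinSum ℰ w P Q *
          (((P.card : ℝ) + (Q.card : ℝ)) / ((P.card : ℝ) * (Q.card : ℝ))) := by
  obtain ⟨hne, hdisj, -⟩ := hPrt
  rw [← mergeGain_pos_iff f ℰ w lam (hne P hP) (hne Q hQ), ← sub_lt_self_iff,
    ← energy_mergeBlocks f ℰ w lam hdisj hP hQ hPQ (hne P hP)]
  rfl

/-- Merging two distinct blocks `P, Q` strictly decreases the energy iff
`‖F_P − F_Q‖² < λ · (Σ_{{p,q}∈ℰ, p∈P, q∈Q} w_{p,q}) · (|P|+|Q|)/(|P|·|Q|)`. -/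
theorem merge_decreases_energy_iff [Fintype C] [DecidableEq C]
    [NormedAddCommGroup E] [InnerProductSpace ℝ E]
    (f : C → E) (ℰ : Finset (Sym2 C)) (hℰ : ∀ e ∈ ℰ, ¬ e.IsDiag)
    (w : Sym2 C → ℝ) (hw : ∀ e ∈ ℰ, 0 < w e) (lam : ℝ) (hlam : 0 < lam)
    (Prt : Finset (Finset C)) (hPrt : IsPartition Prt)
    (P Q : Finset C) (hP : P ∈ Prt) (hQ : Q ∈ Prt) (hPQ : P ≠ Q) :
    energy f ℰ w lam (insert (P ∪ Q) ((Prt.erase P).erase Q)) < energy f ℰ w lam Prt ↔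
      ‖mean f P - mean f Q‖ ^ 2 <
        lam * joinSum ℰ w P Q *
          (((P.card : ℝ) + (Q.card : ℝ)) / ((P.card : ℝ) * (Q.card : ℝ))) :=
  merge_decreases_energy_iff_general f ℰ w lam Prt hPrt P Q hP hQ hPQ
end

section
/- The continuous and combinatorial problems have equal optimal values: the minimum over all maps Y : C → E of the functional Ω(Y) = Σ_{p∈C} ‖f p − Y p‖² + λ · Σ_{{p,q}∈ℰ, Y p ≠ Y q} w_{p,q} equals the minimum over all partitions 𝒫 of C into nonempty blocks of the combinatorial energy Ω(𝒫) = Σ_{U∈𝒫} W(U) + λ · Σ over pairs {p,q} ∈ ℰ whose endpoints lie in different blocks of 𝒫 of w_{p,q}. -/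
open Finset

variable {C E : Type*}

open scoped Classical in
/-- The continuous functional `Ω(Y) = Σ_p ‖f p − Y p‖² + λ · Σ_{{p,q}∈ℰ, Y p ≠ Y q} w_{p,q}`. -/
noncomputable def energyY [Fintype C] [NormedAddCommGroup E] [InnerProductSpace ℝ E]
    (f : C → E) (ℰ : Finset (Sym2 C)) (w : Sym2 C → ℝ) (lam : ℝ) (Y : C → E) : ℝ :=
  ∑ p, ‖f p - Y p‖ ^ 2 +
    lam * ∑ e ∈ ℰ.filter (fun e => ∃ p ∈ e, ∃ q ∈ e, Y p ≠ Y q), w e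

/-!
A map `Y` induces the partition into its level sets. On a level set `Y` is a constant, and the
mean minimises the sum of squared distances (parallel axis identity), while every edge between
two level sets is cut by `Y`; so this partition has energy at most `Ω(Y)`. Conversely, sending
each point to the mean of its block gives a map whose `Ω` is at most the energy of the
partition. There are finitely many partitions, so the combinatorial minimum exists, and by
these two comparisons it is also the continuous one.
-/

theorem IsLeast.of_forall_exists_le {α : Type*} [PartialOrder α] {s t : Set α} {m b : α}
    (hm : IsLeast s m) (hb : b ∈ t) (hbm : b ≤ m) (hts : ∀ c ∈ t, ∃ a ∈ s, a ≤ c) :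
    IsLeast t m := by
  have hlower : m ∈ lowerBounds t := fun c hc =>
    let ⟨_, ha, hac⟩ := hts c hc
    (hm.2 ha).trans hac
  exact ⟨le_antisymm hbm (hlower hb) ▸ hb, hlower⟩

section Mean

variable [NormedAddCommGroup E] [InnerProductSpace ℝ E]

theorem sum_sub_mean_eq_zero (f : C → E) (U : Finset C) : ∑ p ∈ U, (f p - mean f U) = 0 := by
  rcases U.eq_empty_or_nonempty with rfl | hU
  · simp
  have hcard : (U.card : ℝ) ≠ 0 := Nat.cast_ne_zero.2 hU.card_ne_zero
  rw [sum_sub_distrib, sum_const, mean, ← Nat.cast_smul_eq_nsmul ℝ, smul_smul,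
    mul_inv_cancel₀ hcard, one_smul, sub_self]

/-- The parallel axis (König–Huygens) identity. -/
theorem sum_norm_sub_sq_eq_cost_add (f : C → E) (U : Finset C) (y : E) :
    ∑ p ∈ U, ‖f p - y‖ ^ 2 = cost f U + U.card * ‖mean f U - y‖ ^ 2 := by
  have hsplit : ∀ p ∈ U, ‖f p - y‖ ^ 2 =
      ‖f p - mean f U‖ ^ 2 + 2 * inner ℝ (f p - mean f U) (mean f U - y)
        + ‖mean f U - y‖ ^ 2 := fun p _ => by
    rw [← norm_add_sq_real, sub_add_sub_cancel]
  rw [sum_congr rfl hsplit, sum_add_distrib, sum_add_distrib, ← mul_sum, ← sum_inner,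
    sum_sub_mean_eq_zero, inner_zero_left, mul_zero, add_zero, sum_const, nsmul_eq_mul, cost]

theorem cost_le_sum_norm_sub_sq (f : C → E) (U : Finset C) (y : E) :
    cost f U ≤ ∑ p ∈ U, ‖f p - y‖ ^ 2 := by
  rw [sum_norm_sub_sq_eq_cost_add]
  exact le_add_of_nonneg_right (by positivity)

end Mean

namespace IsPartition

variable [Fintype C] {Prt : Finset (Finset C)}

theorem eq_of_mem_of_mem (h : IsPartition Prt) {U V : Finset C} (hU : U ∈ Prt) (hV : V ∈ Prt)
    {p : C} (hpU : p ∈ U) (hpV : p ∈ V) : U = V := by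
  by_contra hne
  exact disjoint_left.1 (h.2.1 U hU V hV hne) hpU hpV

theorem sum_eq_sum_sum {M : Type*} [AddCommMonoid M] (h : IsPartition Prt) (g : C → M) :
    ∑ p, g p = ∑ U ∈ Prt, ∑ p ∈ U, g p := by
  classical
  rw [← sum_biUnion h.2.1]
  congr 1
  ext p
  simpa using h.2.2 p

noncomputable def block (h : IsPartition Prt) (p : C) : Finset C := (h.2.2 p).choose

theorem block_mem (h : IsPartition Prt) (p : C) : h.block p ∈ Prt := (h.2.2 p).choose_spec.1

theorem mem_block (h : IsPartition Prt) (p : C) : p ∈ h.block p := (h.2.2 p).choose_spec.2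

theorem block_eq (h : IsPartition Prt) {U : Finset C} (hU : U ∈ Prt) {p : C} (hp : p ∈ U) :
    h.block p = U :=
  h.eq_of_mem_of_mem (h.block_mem p) hU (h.mem_block p) hp

end IsPartition

section LevelSets

variable [Fintype C] (Y : C → E)

open scoped Classical in
noncomputable def levelSet (p : C) : Finset C := univ.filter fun q => Y q = Y p

open scoped Classical in
noncomputable def levelPartition : Finset (Finset C) := univ.image (levelSet Y)

variable {Y}

@[simp]
theorem mem_levelSet {p q : C} : q ∈ levelSet Y p ↔ Y q = Y p := by
  simp [levelSet]

theorem mem_levelPartition {U : Finset C} : U ∈ levelPartition Y ↔ ∃ p, levelSet Y p = U := by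
  classical
  simp [levelPartition]

variable (Y) in
theorem isPartition_levelPartition : IsPartition (levelPartition Y) := by
  refine ⟨?_, ?_, fun p => ⟨_, mem_levelPartition.2 ⟨p, rfl⟩, mem_levelSet.2 rfl⟩⟩
  · rintro _ hU
    obtain ⟨p, rfl⟩ := mem_levelPartition.1 hU
    exact ⟨p, mem_levelSet.2 rfl⟩
  · rintro _ hU _ hV hUV
    obtain ⟨p, rfl⟩ := mem_levelPartition.1 hU
    obtain ⟨q, rfl⟩ := mem_levelPartition.1 hV
    refine disjoint_left.2 fun r hrp hrq => hUV (Finset.ext fun s => ?_)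
    simp only [mem_levelSet] at hrp hrq ⊢
    rw [← hrp, hrq]

theorem exists_mem_levelPartition_subset_iff (e : Sym2 C) :
    (∃ U ∈ levelPartition Y, ∀ p ∈ e, p ∈ U) ↔ ∀ p ∈ e, ∀ q ∈ e, Y p = Y q := by
  constructor
  · rintro ⟨U, hU, he⟩ p hp q hq
    obtain ⟨r, rfl⟩ := mem_levelPartition.1 hU
    exact (mem_levelSet.1 (he p hp)).trans (mem_levelSet.1 (he q hq)).symm
  · induction e using Sym2.ind with
    | _ a b => exact fun h => ⟨levelSet Y a, mem_levelPartition.2 ⟨a, rfl⟩,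
        fun p hp => mem_levelSet.2 (h p hp a (Sym2.mem_mk_left a b))⟩

end LevelSets

section Energy

variable [Fintype C] [NormedAddCommGroup E] [InnerProductSpace ℝ E]

open scoped Classical in
/-- The fidelity terms agree; the edge terms only satisfy `≤`, since two blocks may have the
same mean, and then the edges between them are not cut. -/
theorem energyY_mean_block_le (f : C → E) (ℰ : Finset (Sym2 C)) (w : Sym2 C → ℝ)
    (hw : ∀ e ∈ ℰ, 0 ≤ w e) (lam : ℝ) (hlam : 0 ≤ lam) {Prt : Finset (Finset C)}
    (h : IsPartition Prt) :
    energyY f ℰ w lam (fun p => mean f (h.block p)) ≤ energy f ℰ w lam Prt := by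
  have hfid : ∑ p, ‖f p - mean f (h.block p)‖ ^ 2 = ∑ U ∈ Prt, cost f U := by
    rw [h.sum_eq_sum_sum]
    refine sum_congr rfl fun U hU => sum_congr rfl fun p hp => ?_
    rw [h.block_eq hU hp]
  rw [energyY, energy, crossSum, hfid]
  gcongr
  · intro e he _
    simp only [mem_filter] at he
    exact hw e he.1
  · rintro ⟨p, hp, q, hq, hpq⟩ ⟨U, hU, hall⟩
    rw [h.block_eq hU (hall p hp), h.block_eq hU (hall q hq)] at hpq
    exact hpq rfl

/-- On each level set `Y` is constant, and no constant beats the mean. -/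
theorem energy_levelPartition_le (f : C → E) (ℰ : Finset (Sym2 C)) (w : Sym2 C → ℝ) (lam : ℝ)
    (Y : C → E) : energy f ℰ w lam (levelPartition Y) ≤ energyY f ℰ w lam Y := by
  have hfid : ∑ U ∈ levelPartition Y, cost f U ≤ ∑ p, ‖f p - Y p‖ ^ 2 := by
    rw [(isPartition_levelPartition Y).sum_eq_sum_sum]
    refine sum_le_sum fun U hU => ?_
    obtain ⟨r, rfl⟩ := mem_levelPartition.1 hU
    calc cost f (levelSet Y r) ≤ ∑ p ∈ levelSet Y r, ‖f p - Y r‖ ^ 2 :=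
          cost_le_sum_norm_sub_sq f _ (Y r)
      _ = ∑ p ∈ levelSet Y r, ‖f p - Y p‖ ^ 2 :=
          sum_congr rfl fun p hp => by rw [mem_levelSet.1 hp]
  rw [energyY, energy, crossSum]
  refine add_le_add hfid (congrArg (lam * ·) (sum_congr ?_ fun _ _ => rfl)).le
  ext e
  simp only [mem_filter, exists_mem_levelPartition_subset_iff, not_forall, exists_prop]

end Energy

theorem continuous_eq_combinatorial_min_general [Fintype C]
    [NormedAddCommGroup E] [InnerProductSpace ℝ E]
    (f : C → E) (ℰ : Finset (Sym2 C))
    (w : Sym2 C → ℝ) (hw : ∀ e ∈ ℰ, 0 < w e) (lam : ℝ) (hlam : 0 < lam) :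
    ∃ m : ℝ,
      IsLeast {r : ℝ | ∃ Y : C → E, r = energyY f ℰ w lam Y} m ∧
      IsLeast {r : ℝ | ∃ Prt : Finset (Finset C), IsPartition Prt ∧
        r = energy f ℰ w lam Prt} m := by
  have hfinite : {r : ℝ | ∃ Prt : Finset (Finset C), IsPartition Prt ∧
      r = energy f ℰ w lam Prt}.Finite :=
    (Set.finite_range (energy f ℰ w lam)).subset fun _ ⟨Prt, _, hr⟩ => ⟨Prt, hr.symm⟩
  obtain ⟨m, hm⟩ := hfinite.isCompact.exists_isLeast
    ⟨_, levelPartition f, isPartition_levelPartition f, rfl⟩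
  obtain ⟨Prt, hPrt, rfl⟩ := hm.1
  refine ⟨_, hm.of_forall_exists_le ⟨_, rfl⟩
    (energyY_mean_block_le f ℰ w (fun e he => (hw e he).le) lam hlam.le hPrt) ?_, hm⟩
  rintro _ ⟨Y, rfl⟩
  exact ⟨_, ⟨levelPartition Y, isPartition_levelPartition Y, rfl⟩,
    energy_levelPartition_le f ℰ w lam Y⟩

/-- The continuous and combinatorial problems have equal optimal values:
the minimum of `Ω(Y)` over all maps `Y : C → E` equals the minimum of the combinatorial
energy `Ω(𝒫)` over all partitions of `C` into nonempty blocks. -/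
theorem continuous_eq_combinatorial_min [Fintype C] [Nonempty C] [DecidableEq C]
    [NormedAddCommGroup E] [InnerProductSpace ℝ E]
    (f : C → E) (ℰ : Finset (Sym2 C)) (hℰ : ∀ e ∈ ℰ, ¬ e.IsDiag)
    (w : Sym2 C → ℝ) (hw : ∀ e ∈ ℰ, 0 < w e) (lam : ℝ) (hlam : 0 < lam) :
    ∃ m : ℝ,
      IsLeast {r : ℝ | ∃ Y : C → E, r = energyY f ℰ w lam Y} m ∧
      IsLeast {r : ℝ | ∃ Prt : Finset (Finset C), IsPartition Prt ∧
        r = energy f ℰ w lam Prt} m :=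
  continuous_eq_combinatorial_min_general f ℰ w hw lam hlam
end
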